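/- For every graph G (simple, non-empty, locally finite, connected) one has C*(G) ≤ C*_E(G) + 2, with the convention that the right-hand side is ∞ when C*_E(G) = ∞. -/

import Mathlib

open MeasureTheory Set
open scoped ENNReal

namespace PercPaper

/-! ### The Bernoulli(p) product measure on `ι → Bool`

We realize the Bernoulli product measure as the pushforward of the uniform
measure on `[0,1)` under the standard digit-interleaving construction:
the binary digits of a uniform point of `[0,1)` are i.i.d. fair coins; by
interleaving (via the pairing function `Nat.pair`) we extract countably many
independent uniform random variables, and thresholding each at `p` produces
i.i.d. Bernoulli(`p`) bits. -/

/-- The `k`-th binary digit of a real number `x ∈ [0,1)`. -/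
noncomputable def digit (k : ℕ) (x : ℝ) : Bool :=
  decide (⌊x * 2 ^ (k + 1)⌋ % 2 = 1)

/-- The `i`-th of countably many independent uniforms extracted from a single
uniform `x ∈ [0,1)` by digit interleaving. -/
noncomputable def unif (i : ℕ) (x : ℝ) : ℝ :=
  ∑' k : ℕ, if digit (Nat.pair i k) x then ((2 : ℝ) ^ (k + 1))⁻¹ else 0

/-- The coordinates of the Bernoulli(`p`) product: coordinate `i` is `true`
("open") iff the `i`-th extracted uniform is `< p`. -/
noncomputable def coords (ι : Type) [Countable ι] (p : ℝ) (x : ℝ) : ι → Bool :=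
  letI : Encodable ι := Encodable.ofCountable ι
  fun i => decide (unif (Encodable.encode i) x < p)

/-- The Bernoulli(`p`) product measure on `ι → Bool`. -/
noncomputable def bernoulliProd (ι : Type) [Countable ι] (p : ℝ) :
    Measure (ι → Bool) :=
  Measure.map (coords ι p) (volume.restrict (Set.Ico (0 : ℝ) 1))

/-! ### Graphs: the class of graphs under consideration -/

/-- A simple, nonempty, locally finite, connected graph.  (Such a graph is
automatically countable; we record countability as a field.) -/
structure SpaceGraph : Type 1 where
  V : Type
  G : SimpleGraph V
  connected : G.Connected
  locallyFinite : ∀ v : V, (G.neighborSet v).Finite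
  countableV : Countable V

instance (Γ : SpaceGraph) : Countable Γ.V := Γ.countableV

/-! ### Combinatorial notions on plain simple graphs -/

/-- `u` and `v` are `k`-adjacent: `1 ≤ d_G(u,v) ≤ k`. -/
def kAdj {V : Type} (G : SimpleGraph V) (k : ℕ) (u v : V) : Prop :=
  1 ≤ G.dist u v ∧ G.dist u v ≤ k

/-- A set of vertices is `k`-connected if it is connected under `k`-adjacency. -/
def kConnectedSet {V : Type} (G : SimpleGraph V) (k : ℕ) (A : Set V) : Prop :=
  ∀ x ∈ A, ∀ y ∈ A,
    Relation.ReflTransGen (fun a b => a ∈ A ∧ b ∈ A ∧ kAdj G k a b) x y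

/-- Two distinct edges are `k`-adjacent if some endpoint of one lies at
distance at most `k` from some endpoint of the other. -/
def edgeKAdj {V : Type} (G : SimpleGraph V) (k : ℕ) (e f : Sym2 V) : Prop :=
  e ≠ f ∧ ∃ x ∈ e, ∃ y ∈ f, G.dist x y ≤ k

/-- A set of edges is `k`-connected if it is connected under `k`-adjacency. -/
def edgeKConnectedSet {V : Type} (G : SimpleGraph V) (k : ℕ) (A : Set (Sym2 V)) : Prop :=
  ∀ e ∈ A, ∀ f ∈ A,
    Relation.ReflTransGen (fun a b => a ∈ A ∧ b ∈ A ∧ edgeKAdj G k a b) e f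

/-- `A` is a cutset between `u` and `v`: every walk from `u` to `v` meets `A`. -/
def IsCutset {V : Type} (G : SimpleGraph V) (A : Set V) (u v : V) : Prop :=
  ∀ w : G.Walk u v, ∃ x ∈ w.support, x ∈ A

/-- `A` is a minimal cutset between `u` and `v`. -/
def IsMinCutset {V : Type} (G : SimpleGraph V) (A : Set V) (u v : V) : Prop :=
  IsCutset G A u v ∧ ∀ B : Set V, B ⊂ A → ¬IsCutset G B u v

/-- `C(G) ≤ k`: every minimal cutset between two vertices is `k`-connected. -/
def cutConnLe {V : Type} (G : SimpleGraph V) (k : ℕ) : Prop :=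
  ∀ u v : V, ∀ A : Set V, IsMinCutset G A u v → kConnectedSet G k A

/-- `C*(G) ≤ k`: every finite minimal cutset between two vertices is `k`-connected. -/
def cutConnStarLe {V : Type} (G : SimpleGraph V) (k : ℕ) : Prop :=
  ∀ u v : V, ∀ A : Set V, A.Finite → IsMinCutset G A u v → kConnectedSet G k A

/-- `A` is a bond-cutset between `u` and `v`: a set of edges of `G` such that
every walk from `u` to `v` uses an edge of `A`. -/
def IsBondCutset {V : Type} (G : SimpleGraph V) (A : Set (Sym2 V)) (u v : V) : Prop :=
  A ⊆ G.edgeSet ∧ ∀ w : G.Walk u v, ∃ e ∈ w.edges, e ∈ A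

/-- `A` is a minimal bond-cutset between `u` and `v`. -/
def IsMinBondCutset {V : Type} (G : SimpleGraph V) (A : Set (Sym2 V)) (u v : V) : Prop :=
  IsBondCutset G A u v ∧ ∀ B : Set (Sym2 V), B ⊂ A → ¬IsBondCutset G B u v

/-- `C_E(G) ≤ k`: every minimal bond-cutset between two vertices is `k`-connected. -/
def edgeCutConnLe {V : Type} (G : SimpleGraph V) (k : ℕ) : Prop :=
  ∀ u v : V, ∀ A : Set (Sym2 V), IsMinBondCutset G A u v → edgeKConnectedSet G k A

/-- `C*_E(G) ≤ k`: every finite minimal bond-cutset between two vertices is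
`k`-connected. -/
def edgeCutConnStarLe {V : Type} (G : SimpleGraph V) (k : ℕ) : Prop :=
  ∀ u v : V, ∀ A : Set (Sym2 V), A.Finite → IsMinBondCutset G A u v →
    edgeKConnectedSet G k A

/-- Reachability inside a set `S` of vertices. -/
def reachIn {V : Type} (G : SimpleGraph V) (S : Set V) : V → V → Prop :=
  Relation.ReflTransGen fun a b => a ∈ S ∧ b ∈ S ∧ G.Adj a b

/-- There is a path from `x` to `y` all of whose vertices lie in `S`. -/
def pathIn {V : Type} (G : SimpleGraph V) (S : Set V) (x y : V) : Prop :=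
  x ∈ S ∧ reachIn G S x y

/-- The connected component of `u` of the subgraph induced on `S`. -/
def compIn {V : Type} (G : SimpleGraph V) (S : Set V) (u : V) : Set V :=
  {v | pathIn G S u v}

/-- `G` is one-ended: for every finite set `F` of vertices, the complement of
`F` has exactly one infinite connected component. -/
def OneEnded {V : Type} (G : SimpleGraph V) : Prop :=
  ∀ F : Set V, F.Finite →
    ∃ u, u ∉ F ∧ (compIn G Fᶜ u).Infinite ∧
      ∀ v, v ∉ F → (compIn G Fᶜ v).Infinite → pathIn G Fᶜ u v

/-- The outer vertex boundary `∂_V A`: vertices not in `A` adjacent to `A`. -/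
def vertexBoundary {V : Type} (G : SimpleGraph V) (A : Set V) : Set V :=
  {v | v ∉ A ∧ ∃ u ∈ A, G.Adj u v}

/-- A fibration: a 1-Lipschitz map along which every edge at the image of `x`
lifts to an edge at `x`. -/
def IsFibration {V W : Type} (GrL : SimpleGraph V) (GrS : SimpleGraph W)
    (pr : V → W) : Prop :=
  (∀ x y : V, GrS.dist (pr x) (pr y) ≤ GrL.dist x y) ∧
  (∀ (x : V) (v : W), GrS.Adj (pr x) v → ∃ y : V, GrL.Adj x y ∧ pr y = v)

/-- `φ` is an `A`-quasi-isometry. -/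
def IsQI {V W : Type} (A : ℝ) (G : SimpleGraph V) (H : SimpleGraph W)
    (φ : V → W) : Prop :=
  (∀ x y : V, (1 / A) * (G.dist x y : ℝ) - A ≤ (H.dist (φ x) (φ y) : ℝ) ∧
      (H.dist (φ x) (φ y) : ℝ) ≤ A * (G.dist x y : ℝ) + A) ∧
  (∀ z : W, ∃ x : V, (H.dist z (φ x) : ℝ) ≤ A)

/-- `G` and `H` are `A`-quasi-isometric (with `A`-quasi-inverse maps). -/
def QuasiIsometric {V W : Type} (A : ℝ) (G : SimpleGraph V) (H : SimpleGraph W) : Prop :=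
  ∃ (φ : V → W) (ψ : W → V), IsQI A G H φ ∧ IsQI A H G ψ ∧
    (∀ x : V, (G.dist (ψ (φ x)) x : ℝ) ≤ A) ∧
    (∀ z : W, (H.dist (φ (ψ z)) z : ℝ) ≤ A)

/-! ### Balls, transitivity, the class `𝔊`, and the local topology -/

/-- The ball of radius `r` around `o`. -/
def ball (Γ : SpaceGraph) (o : Γ.V) (r : ℕ) : Set Γ.V := {v | Γ.G.dist o v ≤ r}

/-- The sphere of radius `r` around `o`. -/
def sphere (Γ : SpaceGraph) (o : Γ.V) (r : ℕ) : Set Γ.V := {v | Γ.G.dist o v = r}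

/-- `Γ` is (vertex-)transitive. -/
def IsTransitive (Γ : SpaceGraph) : Prop :=
  ∀ u v : Γ.V, ∃ φ : Γ.G ≃g Γ.G, φ u = v

/-- Membership in the class `𝔊`: transitive, superlinear growth, and
polynomial growth. -/
def InPolyClass (Γ : SpaceGraph) : Prop :=
  IsTransitive Γ ∧
  (∀ (o : Γ.V) (K : ℕ), ∃ R : ℕ, ∀ r : ℕ, R ≤ r → K * r ≤ (ball Γ o r).ncard) ∧
  (∃ C d : ℕ, ∀ (o : Γ.V) (r : ℕ), 1 ≤ r → (ball Γ o r).ncard ≤ C * r ^ d)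

lemma self_mem_ball (Γ : SpaceGraph) (o : Γ.V) (r : ℕ) : o ∈ ball Γ o r := by
  simp [ball, SimpleGraph.dist_self]

/-- The rooted balls of radius `r` in `Γ` (around `o`) and `Δ` (around `o'`)
are isomorphic, by an isomorphism matching the roots. -/
def rootedBallIso (Γ Δ : SpaceGraph) (o : Γ.V) (o' : Δ.V) (r : ℕ) : Prop :=
  ∃ φ : Γ.G.induce (ball Γ o r) ≃g Δ.G.induce (ball Δ o' r),
    φ ⟨o, self_mem_ball Γ o r⟩ = ⟨o', self_mem_ball Δ o' r⟩

/-- `R(Γ,Δ) ≥ r`: the `r`-balls of `Γ` and `Δ` are isomorphic as rooted graphs. -/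
def RGe (Γ Δ : SpaceGraph) (r : ℕ) : Prop :=
  ∃ (o : Γ.V) (o' : Δ.V), rootedBallIso Γ Δ o o' r

/-! ### Bernoulli percolation -/

/-- The probability of the event `A` under Bernoulli(`p`) bond percolation on `Γ`.
(Configurations assign a state to every element of `Sym2 Γ.V`; only the states
of actual edges matter for the events considered.) -/
noncomputable def prob (Γ : SpaceGraph) (p : ℝ) (A : Set (Sym2 Γ.V → Bool)) : ℝ :=
  (bernoulliProd (Sym2 Γ.V) p A).toReal

/-- The probability of the event `A`, as an extended nonnegative real. -/
noncomputable def probNN (Γ : SpaceGraph) (p : ℝ) (A : Set (Sym2 Γ.V → Bool)) : ℝ≥0∞ :=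
  bernoulliProd (Sym2 Γ.V) p A

/-- `u` and `v` are adjacent and the edge between them is open in `ω`. -/
def openAdj (Γ : SpaceGraph) (ω : Sym2 Γ.V → Bool) (u v : Γ.V) : Prop :=
  Γ.G.Adj u v ∧ ω s(u, v) = true

/-- `u` and `v` are connected by an open path in `ω`. -/
def Conn (Γ : SpaceGraph) (ω : Sym2 Γ.V → Bool) (u v : Γ.V) : Prop :=
  Relation.ReflTransGen (openAdj Γ ω) u v

/-- The (open) cluster of `u` in `ω`. -/
def cluster (Γ : SpaceGraph) (ω : Sym2 Γ.V → Bool) (u : Γ.V) : Set Γ.V :=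
  {v | Conn Γ ω u v}

/-- `θ_Γ(p)` with root `o` (independent of `o` for transitive graphs). -/
noncomputable def theta (Γ : SpaceGraph) (o : Γ.V) (p : ℝ) : ℝ :=
  prob Γ p {ω | (cluster Γ ω o).Infinite}

/-- The critical parameter `p_c(Γ)` (with root `o`). -/
noncomputable def pc (Γ : SpaceGraph) (o : Γ.V) : ℝ :=
  sInf ({1} ∪ {p : ℝ | p ∈ Set.Icc (0 : ℝ) 1 ∧ 0 < theta Γ o p})


/-! ### Good and bad vertices, interfaces -/

/-- Open connectivity using only vertices of `S`. -/
def ConnIn (Γ : SpaceGraph) (ω : Sym2 Γ.V → Bool) (S : Set Γ.V) (u v : Γ.V) : Prop :=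
  Relation.ReflTransGen (fun a b => a ∈ S ∧ b ∈ S ∧ openAdj Γ ω a b) u v

/-- The uniqueness event `U(m,n,x)`: at most one cluster of `ω` restricted to
`B(x,n)` intersects both `B(x,m)` and `S(x,n)`. -/
def UEvent (Γ : SpaceGraph) (ω : Sym2 Γ.V → Bool) (m n : ℕ) (x : Γ.V) : Prop :=
  ∀ a b a' b' : Γ.V, a ∈ ball Γ x m → b ∈ sphere Γ x n →
    a' ∈ ball Γ x m → b' ∈ sphere Γ x n →
    ConnIn Γ ω (ball Γ x n) a b → ConnIn Γ ω (ball Γ x n) a' b' →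
    ConnIn Γ ω (ball Γ x n) a a'

/-- `x` is `N`-good in `ω`. -/
def NGood (Γ : SpaceGraph) (ω : Sym2 Γ.V → Bool) (N : ℕ) (x : Γ.V) : Prop :=
  ∀ z : Γ.V, (z = x ∨ Γ.G.Adj x z) →
    (∃ a ∈ ball Γ z N, ∃ b ∈ sphere Γ z (10 * N), Conn Γ ω a b) ∧
      UEvent Γ ω (2 * N) (5 * N) z

/-- `x` is `N`-bad in `ω`. -/
def NBad (Γ : SpaceGraph) (ω : Sym2 Γ.V → Bool) (N : ℕ) (x : Γ.V) : Prop :=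
  ¬NGood Γ ω N x

/-- `C_x^bad(N)`: the `t`-connected component of `x` within the `N`-bad
vertices (empty if `x` is `N`-good). -/
def badComp (Γ : SpaceGraph) (ω : Sym2 Γ.V → Bool) (N t : ℕ) (x : Γ.V) : Set Γ.V :=
  {y | NBad Γ ω N x ∧
    Relation.ReflTransGen (fun a b => NBad Γ ω N a ∧ NBad Γ ω N b ∧ kAdj Γ.G t a b) x y}

/-- `C_o(N)`: the set of vertices within distance `N` of the cluster of `o`. -/
def clusterNbhd (Γ : SpaceGraph) (ω : Sym2 Γ.V → Bool) (o : Γ.V) (N : ℕ) : Set Γ.V :=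
  {v | ∃ u ∈ cluster Γ ω o, Γ.G.dist v u ≤ N}

/-- The exposed boundary `∂A`: vertices of `A` adjacent to an infinite
connected component of the complement of `A`. -/
def exposedBoundary (Γ : SpaceGraph) (A : Set Γ.V) : Set Γ.V :=
  {v | v ∈ A ∧ ∃ w, w ∉ A ∧ Γ.G.Adj v w ∧ (compIn Γ.G Aᶜ w).Infinite}

/-- An interface (relative to the root `o` and the connectivity constant `t`):
a finite `t`-connected set of vertices containing `o` or surrounding `o`. -/
def IsInterface (Γ : SpaceGraph) (o : Γ.V) (t : ℕ) (I : Finset Γ.V) : Prop :=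
  kConnectedSet Γ.G t (↑I : Set Γ.V) ∧
    (o ∈ I ∨ (o ∉ I ∧ (compIn Γ.G ((↑I : Set Γ.V))ᶜ o).Finite))

/-- The set of vertices within distance `r` of `I`. -/
def interfaceNbhd (Γ : SpaceGraph) (I : Finset Γ.V) (r : ℕ) : Set Γ.V :=
  {v | ∃ y ∈ I, Γ.G.dist v y ≤ r}

/-- The interface `I` occurs in `ω` at scale `N`: all its vertices are `N`-bad,
all vertices at distance between `1` and `t` from it are `N`-good, and the
closed edges with both endpoints within distance `5N` of `I` form a
bond-cutset between `o` and infinity. -/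
def InterfaceOccurs (Γ : SpaceGraph) (o : Γ.V) (t N : ℕ) (ω : Sym2 Γ.V → Bool)
    (I : Finset Γ.V) : Prop :=
  (∀ x ∈ I, NBad Γ ω N x) ∧
  (∀ x : Γ.V, x ∉ I → (∃ y ∈ I, Γ.G.dist x y ≤ t) → NGood Γ ω N x) ∧
  (∀ f : ℕ → Γ.V, f 0 = o → Function.Injective f →
    (∀ n : ℕ, Γ.G.Adj (f n) (f (n + 1))) →
    ∃ n : ℕ, ω s(f n, f (n + 1)) = false ∧
      f n ∈ interfaceNbhd Γ I (5 * N) ∧ f (n + 1) ∈ interfaceNbhd Γ I (5 * N))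

/-- A multi-interface: a finite nonempty collection of pairwise disjoint
interfaces. -/
def IsMultiInterface (Γ : SpaceGraph) (o : Γ.V) (t : ℕ)
    (M : Finset (Finset Γ.V)) : Prop :=
  M.Nonempty ∧ (∀ I ∈ M, IsInterface Γ o t I) ∧
    ∀ I ∈ M, ∀ J ∈ M, I ≠ J → Disjoint I J

/-- The size of a multi-interface. -/
def multiSize {α : Type} (M : Finset (Finset α)) : ℕ := ∑ I ∈ M, I.card

/-- The multi-interface `M` occurs in `ω` at scale `N`. -/
def MultiOccurs (Γ : SpaceGraph) (o : Γ.V) (t N : ℕ) (ω : Sym2 Γ.V → Bool)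
    (M : Finset (Finset Γ.V)) : Prop :=
  ∀ I ∈ M, InterfaceOccurs Γ o t N ω I

/-! ### Growth degree and dimension -/

/-- `Γ` has growth of degree at most `d`. -/
def growthLe (Γ : SpaceGraph) (d : ℕ) : Prop :=
  ∃ C : ℕ, ∀ (o : Γ.V) (r : ℕ), 1 ≤ r → (ball Γ o r).ncard ≤ C * r ^ d

/-- The dimension of a graph of polynomial growth: the least degree `d` of a
polynomial upper bound on the growth. -/
noncomputable def dimen (Γ : SpaceGraph) : ℕ := sInf {d | growthLe Γ d}

/-! ### Cayley graphs and products of cycle-graphs -/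

/-- The Cayley graph of a group `K` with respect to a (symmetrized) set `T`. -/
def cayley (K : Type) [Group K] (T : Set K) : SimpleGraph K where
  Adj g h := g ≠ h ∧ (g⁻¹ * h ∈ T ∨ h⁻¹ * g ∈ T)
  symm := ⟨by
    rintro g h ⟨hgh, hmem⟩
    exact ⟨hgh.symm, hmem.symm⟩⟩
  loopless := ⟨fun g h => h.1 rfl⟩

/-- A finitely generated group is one-ended if all of its Cayley graphs with
respect to finite generating sets are one-ended. -/
def GroupOneEnded (K : Type) [Group K] : Prop :=
  ∀ T : Set K, T.Finite → Subgroup.closure T = ⊤ → OneEnded (cayley K T)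

/-- The box product of a finite family of graphs. -/
def boxProd {m : ℕ} (Vf : Fin m → Type) (Gf : ∀ i, SimpleGraph (Vf i)) :
    SimpleGraph (∀ i, Vf i) where
  Adj a b := ∃ i, (Gf i).Adj (a i) (b i) ∧ ∀ j, j ≠ i → a j = b j
  symm := ⟨by
    rintro a b ⟨i, hadj, h⟩
    exact ⟨i, hadj.symm, fun j hj => (h j hj).symm⟩⟩
  loopless := ⟨by
    rintro a ⟨i, hadj, -⟩
    exact (Gf i).irrefl hadj⟩

/-- Membership in the class `𝔄`: products of finitely many cycle-graphs
(connected graphs in which every vertex has degree 2), at least two of which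
are infinite. -/
def InA (Γ : SpaceGraph) : Prop :=
  ∃ (m : ℕ) (Vf : Fin m → Type) (Gf : ∀ i, SimpleGraph (Vf i)),
    (∀ i, (Gf i).Connected) ∧
    (∀ (i : Fin m) (v : Vf i), ((Gf i).neighborSet v).ncard = 2) ∧
    (∃ i j : Fin m, i ≠ j ∧ Infinite (Vf i) ∧ Infinite (Vf j)) ∧
    Nonempty (Γ.G ≃g boxProd Vf Gf)

/-! Let `A` be a finite minimal cutset between `u` and `v` with `u ∉ A` (otherwise `A = {u}`),
and let `K` be the component of `u` in `G - A`. The edges from `K` to `A` form a finite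
bond-cutset; a minimal bond-cutset `P` inside it is `k`-connected. Minimality of `A` forces every
`a ∈ A` to be the endpoint in `A` of some edge of `P`, and the endpoints in `A` of two
`k`-adjacent edges are at distance at most `k + 2`, so `A` is `(k + 2)`-connected. -/

lemma reflTransGen_of_lift {α β : Type*} {r : α → α → Prop} {p : β → β → Prop}
    (T : α → β → Prop) (hunique : ∀ {a x y}, T a x → T a y → x = y)
    (hsrc : ∀ {a b}, r a b → ∃ x, T a x)
    (hstep : ∀ {a b x y}, r a b → T a x → T b y → Relation.ReflTransGen p x y)
    {a b : α} {x y : β} (hab : Relation.ReflTransGen r a b) (hx : T a x) (hy : T b y) :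
    Relation.ReflTransGen p x y := by
  induction hab generalizing y with
  | refl => rw [hunique hx hy]
  | tail _ hcb ih =>
    obtain ⟨z, hz⟩ := hsrc hcb
    exact (ih hz).trans (hstep hcb hz hy)

section Cutsets

variable {V : Type} {G : SimpleGraph V}

lemma compIn_subset (S : Set V) (u : V) : compIn G S u ⊆ S := by
  rintro x ⟨hu, hreach⟩
  rcases hreach.cases_tail with rfl | ⟨_, -, -, hx, -⟩
  exacts [hu, hx]

lemma mem_compIn_of_adj {S : Set V} {u x y : V} (hx : x ∈ compIn G S u) (hxy : G.Adj x y)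
    (hy : y ∈ S) : y ∈ compIn G S u :=
  ⟨hx.1, hx.2.tail ⟨compIn_subset S u hx, hy, hxy⟩⟩

lemma exists_walk_of_mem_compIn {S : Set V} {u x : V} (hx : x ∈ compIn G S u) :
    ∃ w : G.Walk u x, ∀ z ∈ w.support, z ∈ S := by
  obtain ⟨hu, hreach⟩ := hx
  induction hreach with
  | refl => exact ⟨.nil, by simpa using hu⟩
  | tail _ step ih =>
    obtain ⟨w, hw⟩ := ih
    refine ⟨w.concat step.2.2, fun z hz => ?_⟩
    rw [SimpleGraph.Walk.support_concat, List.mem_append, List.mem_singleton] at hz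
    rcases hz with hz | rfl
    exacts [hw z hz, step.2.1]

lemma IsCutset.not_mem_compIn {A : Set V} {u v : V} (hA : IsCutset G A u v) :
    v ∉ compIn G Aᶜ u := fun hv =>
  let ⟨w, hw⟩ := exists_walk_of_mem_compIn hv
  let ⟨z, hz, hzA⟩ := hA w
  hw z hz hzA

lemma IsMinCutset.eq_singleton_of_left_mem {A : Set V} {u v : V} (hA : IsMinCutset G A u v)
    (hu : u ∈ A) : A = {u} := by
  by_contra hne
  exact hA.2 {u} ((Set.singleton_subset_iff.2 hu).ssubset_of_ne (Ne.symm hne))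
    fun w => ⟨u, w.start_mem_support, rfl⟩

lemma kConnectedSet_singleton (k : ℕ) (a : V) : kConnectedSet G k {a} := by
  rintro x rfl y rfl
  rfl

def edgesBetween (G : SimpleGraph V) (K A : Set V) : Set (Sym2 V) :=
  {e | ∃ x ∈ K, ∃ y ∈ A, G.Adj x y ∧ e = s(x, y)}

lemma edgesBetween_subset_edgeSet (K A : Set V) : edgesBetween G K A ⊆ G.edgeSet := by
  rintro _ ⟨x, -, y, -, hxy, rfl⟩
  exact hxy

lemma finite_edgesBetween (hlf : ∀ v : V, (G.neighborSet v).Finite) (K : Set V) {A : Set V}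
    (hA : A.Finite) : (edgesBetween G K A).Finite :=
  (hA.biUnion fun a _ => (hlf a).image fun x => s(x, a)).subset <| by
    rintro _ ⟨x, -, y, hy, hxy, rfl⟩
    exact Set.mem_biUnion hy ⟨x, hxy.symm, rfl⟩

lemma eq_of_mem_edgesBetween {K A : Set V} (hKA : K ⊆ Aᶜ) {e : Sym2 V}
    (he : e ∈ edgesBetween G K A) {a b : V} (ha : a ∈ A) (hae : a ∈ e) (hb : b ∈ A)
    (hbe : b ∈ e) : a = b := by
  obtain ⟨x, hx, y, -, -, rfl⟩ := he
  have endpoint_eq {c : V} (hc : c ∈ A) (hce : c ∈ s(x, y)) : c = y := by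
    rcases Sym2.mem_iff.1 hce with rfl | rfl
    exacts [absurd hc (hKA hx), rfl]
  rw [endpoint_eq ha hae, endpoint_eq hb hbe]

lemma isBondCutset_edgesBetween_compIn {A : Set V} {u v : V} (hA : IsCutset G A u v)
    (hu : u ∉ A) : IsBondCutset G (edgesBetween G (compIn G Aᶜ u) A) u v := by
  refine ⟨edgesBetween_subset_edgeSet _ _, fun w => ?_⟩
  obtain ⟨d, hd, hK, hnK⟩ := w.exists_boundary_dart (compIn G Aᶜ u) ⟨hu, .refl⟩ hA.not_mem_compIn
  have hdA : d.snd ∈ A := not_not.1 fun h => hnK (mem_compIn_of_adj hK d.adj h)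
  exact ⟨d.edge, List.mem_map_of_mem hd, d.fst, hK, d.snd, hdA, d.adj, rfl⟩

lemma IsBondCutset.exists_isMinBondCutset_subset {B : Set (Sym2 V)} {u v : V}
    (hB : IsBondCutset G B u v) (hfin : B.Finite) : ∃ C ⊆ B, IsMinBondCutset G C u v := by
  obtain ⟨⟨C, hCfin⟩, hCB, hC, hmin⟩ := exists_minimal_le_of_wellFoundedLT
    (fun C : {s : Set (Sym2 V) // s.Finite} => IsBondCutset G C.1 u v) ⟨B, hfin⟩ hB
  exact ⟨C, hCB, hC, fun D hDC hD =>
    hDC.2 (hmin (y := ⟨D, hCfin.subset hDC.1⟩) hD hDC.1)⟩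

lemma IsMinCutset.exists_edge_of_isBondCutset {A K : Set V} {P : Set (Sym2 V)} {u v : V}
    (hA : IsMinCutset G A u v) (hP : IsBondCutset G P u v) (hPK : P ⊆ edgesBetween G K A)
    {a : V} (ha : a ∈ A) : ∃ e ∈ P, a ∈ e := by
  obtain ⟨w, hw⟩ : ∃ w : G.Walk u v, ∀ z ∈ w.support, z ∉ A \ {a} := by
    simpa [IsCutset] using hA.2 (A \ {a}) (Set.sdiff_singleton_ssubset.2 ha)
  obtain ⟨e, hew, heP⟩ := hP.2 w
  obtain ⟨x, -, y, hy, -, rfl⟩ := hPK heP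
  have hya : y = a := by
    by_contra hne
    exact hw y (w.snd_mem_support_of_mem_edges hew) ⟨hy, hne⟩
  exact ⟨_, heP, hya ▸ Sym2.mem_mk_right x y⟩

lemma dist_le_one_of_mem_edgeSet {e : Sym2 V} (he : e ∈ G.edgeSet) {a b : V} (ha : a ∈ e)
    (hb : b ∈ e) : G.dist a b ≤ 1 := by
  rcases eq_or_ne a b with rfl | hab
  · simp
  · rw [(Sym2.mem_and_mem_iff hab).1 ⟨ha, hb⟩, SimpleGraph.mem_edgeSet] at he
    exact (SimpleGraph.dist_eq_one_iff_adj.2 he).le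

lemma dist_le_add_two_of_edgeKAdj (hconn : G.Connected) {k : ℕ} {e f : Sym2 V}
    (he : e ∈ G.edgeSet) (hf : f ∈ G.edgeSet) (hef : edgeKAdj G k e f) {a b : V} (ha : a ∈ e)
    (hb : b ∈ f) : G.dist a b ≤ k + 2 := by
  obtain ⟨-, p, hp, q, hq, hpq⟩ := hef
  calc G.dist a b ≤ G.dist a p + G.dist p q + G.dist q b :=
        hconn.dist_triangle.trans (Nat.add_le_add_right hconn.dist_triangle _)
    _ ≤ 1 + k + 1 := by
        gcongr
        exacts [dist_le_one_of_mem_edgeSet he ha hp, dist_le_one_of_mem_edgeSet hf hq hb]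
    _ = k + 2 := by ring

lemma IsMinCutset.kConnectedSet_of_edgeKConnectedSet (hconn : G.Connected) {k : ℕ}
    {A K : Set V} {P : Set (Sym2 V)} {u v : V} (hA : IsMinCutset G A u v) (hKA : K ⊆ Aᶜ)
    (hP : IsBondCutset G P u v) (hPK : P ⊆ edgesBetween G K A)
    (hPconn : edgeKConnectedSet G k P) : kConnectedSet G (k + 2) A := by
  intro a ha b hb
  obtain ⟨e, he, hae⟩ := hA.exists_edge_of_isBondCutset hP hPK ha
  obtain ⟨f, hf, hbf⟩ := hA.exists_edge_of_isBondCutset hP hPK hb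
  refine reflTransGen_of_lift (fun e a => e ∈ P ∧ a ∈ A ∧ a ∈ e) ?_ ?_ ?_
    (hPconn e he f hf) ⟨he, ha, hae⟩ ⟨hf, hb, hbf⟩
  · rintro e a a' ⟨he, ha, hae⟩ ⟨-, ha', hae'⟩
    exact eq_of_mem_edgesBetween hKA (hPK he) ha hae ha' hae'
  · rintro e - ⟨he, -, -⟩
    obtain ⟨x, -, y, hy, -, rfl⟩ := hPK he
    exact ⟨y, he, hy, Sym2.mem_mk_right x y⟩
  · rintro e f a b ⟨he, hf, hef⟩ ⟨-, ha, hae⟩ ⟨-, hb, hbf⟩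
    rcases eq_or_ne a b with rfl | hab
    · rfl
    · exact .single ⟨ha, hb, hconn.pos_dist_of_ne hab,
        dist_le_add_two_of_edgeKAdj hconn (hP.1 he) (hP.1 hf) hef hae hbf⟩

end Cutsets

theorem cutConnStar_le_edgeCutConnStar_add_two_general
    {V : Type} (G : SimpleGraph V) (hconn : G.Connected)
    (hlf : ∀ v : V, (G.neighborSet v).Finite) :
    ∀ k : ℕ, 1 ≤ k → edgeCutConnStarLe G k → cutConnStarLe G (k + 2) := by
  intro k _ hE u v A hAfin hA
  by_cases hu : u ∈ A
  · rw [hA.eq_singleton_of_left_mem hu]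
    exact kConnectedSet_singleton _ _
  have hfin := finite_edgesBetween hlf (compIn G Aᶜ u) hAfin
  obtain ⟨P, hPK, hPmin⟩ :=
    (isBondCutset_edgesBetween_compIn hA.1 hu).exists_isMinBondCutset_subset hfin
  exact hA.kConnectedSet_of_edgeKConnectedSet hconn (compIn_subset _ _) hPmin.1 hPK
    (hE u v P (hfin.subset hPK) hPmin)

/-- Lemma: `C*(G) ≤ C*_E(G) + 2`.
For every graph `G` and every `k ≥ 1`, if `C*_E(G) ≤ k` then `C*(G) ≤ k + 2`. -/
theorem cutConnStar_le_edgeCutConnStar_add_two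
    {V : Type} (G : SimpleGraph V) (hne : Nonempty V) (hconn : G.Connected)
    (hlf : ∀ v : V, (G.neighborSet v).Finite) :
    ∀ k : ℕ, 1 ≤ k → edgeCutConnStarLe G k → cutConnStarLe G (k + 2) :=
  cutConnStar_le_edgeCutConnStar_add_two_general G hconn hlf

end PercPaper
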